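/- For every positive integer n, every real α with 0 < α ≤ 1/n and every real x ≥ 0, the third and fourth central moments satisfy Θ_{n,3}^[α](x) = (2α²n³x + 9αn²x + 12nx + 6)/n³ and Θ_{n,4}^[α](x) = (3α²n⁴x(2α + x) + 4αn³x(8α + 3x) + 12n²x(6α + x) + 72nx + 24)/n⁴. -/

import Mathlib

open MeasureTheory Filter

noncomputable section

/-- The Szász basis function `e^(-nu) (nu)^i / i!`. -/
def szaszBasis (n i : ℕ) (u : ℝ) : ℝ :=
  Real.exp (-(n : ℝ) * u) * ((n : ℝ) * u) ^ i / (Nat.factorial i : ℝ)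

/-- The rising factorial `x^(i,-α) = ∏_{j=0}^{i-1} (x + jα)` with increment `α`. -/
def risingFac (x α : ℝ) (i : ℕ) : ℝ :=
  ∏ j ∈ Finset.range i, (x + (j : ℝ) * α)

/-- The Durrmeyer modification of the generalized Szász-Mirakjan operators:
`U_n^[α](f; x) = n Σ_i (1+nα)^(−x/α) (α+1/n)^(−i) x^(i,−α)/i! ∫_0^∞ e^(−nu)(nu)^i/i! f(u) du`. -/
def U (n : ℕ) (α : ℝ) (f : ℝ → ℝ) (x : ℝ) : ℝ :=
  (n : ℝ) * ∑' i : ℕ,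
    (1 + (n : ℝ) * α) ^ (-x / α) * (α + 1 / (n : ℝ)) ^ (-(i : ℤ)) *
      (risingFac x α i / (Nat.factorial i : ℝ)) *
      ∫ u in Set.Ioi (0 : ℝ), szaszBasis n i u * f u

/-- The `m`-th central moment `Θ_{n,m}^[α](x) = U_n^[α]((t−x)^m; x)`. -/
def theta (n : ℕ) (α : ℝ) (m : ℕ) (x : ℝ) : ℝ :=
  U n α (fun t => (t - x) ^ m) x

end

/-!
The weights `w_i = (1+nα)^(-x/α) (α+1/n)^(-i) x^(i,-α)/i!` of `U_n^[α]` form a negative binomial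
distribution: by the binomial series `(1-t)^(-s) = ∑ s(s+1)⋯(s+j-1) t^j/j!`, its factorial moments
are `∑ w_i i(i-1)⋯(i-r+1) = n^r x^(r,-α)`. The Szász integrals are Gamma integrals,
`∫ s_{n,i}(u) u^k du = (i+k)!/(i! n^(k+1))`, and Chu–Vandermonde writes `(i+k)!/i!` in falling
factorials of `i`. Expanding `(u-x)^m` binomially thus turns `Θ_{n,m}^[α](x)` into a finite double
sum, which for `m = 3, 4` is the stated polynomial.
-/

open Set Real Finset

theorem risingFac_succ (x α : ℝ) (i : ℕ) :
    risingFac x α (i + 1) = risingFac x α i * (x + i * α) :=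
  prod_range_succ _ _

theorem risingFac_add (x α : ℝ) (r j : ℕ) :
    risingFac x α (r + j) = risingFac x α r * risingFac (x + r * α) α j := by
  rw [risingFac, risingFac, risingFac, prod_range_add]
  congr 1
  refine prod_congr rfl fun k _ => ?_
  push_cast
  ring

theorem risingFac_eq_pow_mul {α : ℝ} (hα : α ≠ 0) (y : ℝ) (j : ℕ) :
    risingFac y α j = α ^ j * risingFac (y / α) 1 j := by
  induction j with
  | zero => simp [risingFac]
  | succ j ih =>
    rw [risingFac_succ, risingFac_succ, ih, pow_succ]
    field_simp

theorem risingFac_one_eq_ascPochhammer_eval (s : ℝ) (j : ℕ) :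
    risingFac s 1 j = (ascPochhammer ℝ j).eval s := by
  induction j with
  | zero => simp [risingFac]
  | succ j ih => rw [risingFac, prod_range_succ, ← risingFac, ih, ascPochhammer_succ_eval]; ring

theorem hasSum_risingFac_one {t : ℝ} (ht : |t| < 1) (s : ℝ) :
    HasSum (fun j : ℕ => risingFac s 1 j * t ^ j / (j.factorial : ℝ)) ((1 - t) ^ (-s)) := by
  have h := (Real.one_div_one_sub_rpow_hasFPowerSeriesOnBall_zero s).hasSum
    (y := t) (by simpa [enorm_eq_nnnorm, ← NNReal.coe_lt_one] using ht)
  have h1t : 0 ≤ 1 - t := by linarith [le_abs_self t]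
  simp only [FormalMultilinearSeries.ofScalars_apply_eq, zero_add, smul_eq_mul] at h
  have hterm : (fun j : ℕ => risingFac s 1 j * t ^ j / (j.factorial : ℝ)) =
      fun j : ℕ => Ring.choose (s + j - 1) j * t ^ j := by
    funext j
    rw [← Ring.multichoose_eq, risingFac_one_eq_ascPochhammer_eval, ← Polynomial.ascPochhammer_smeval_eq_eval,
      ← Ring.factorial_nsmul_multichoose_eq_ascPochhammer, nsmul_eq_mul]
    field_simp
  rwa [Real.rpow_neg h1t, ← one_div, hterm]

theorem hasSum_risingFac {α t : ℝ} (hα : α ≠ 0) (ht : |α * t| < 1) (y : ℝ) :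
    HasSum (fun j : ℕ => risingFac y α j * t ^ j / (j.factorial : ℝ))
      ((1 - α * t) ^ (-(y / α))) := by
  convert hasSum_risingFac_one ht (y / α) using 2 with j
  rw [risingFac_eq_pow_mul hα, mul_pow]
  ring

theorem Nat.add_descFactorial_eq_sum (a b k : ℕ) :
    (a + b).descFactorial k =
      ∑ r ∈ range (k + 1), k.choose r * a.descFactorial r * b.descFactorial (k - r) := by
  have h := Ring.descPochhammer_smeval_add (R := ℤ) (r := a) (s := b) k (Commute.all _ _)
  simp only [← Nat.cast_add, Polynomial.descPochhammer_smeval_eq_descFactorial,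
    Nat.sum_antidiagonal_eq_sum_range_succ_mk, ← mul_assoc] at h
  exact_mod_cast h

theorem szaszBasis_mul_pow (n i k : ℕ) (u : ℝ) :
    szaszBasis n i u * u ^ k =
      (n : ℝ) ^ i / (i.factorial : ℝ) * (u ^ (i + k) * exp (-(n * u))) := by
  rw [szaszBasis, mul_pow, pow_add, neg_mul]
  ring

theorem integrableOn_szaszBasis_mul_pow {n : ℕ} (hn : 0 < n) (i k : ℕ) :
    IntegrableOn (fun u => szaszBasis n i u * u ^ k) (Ioi 0) := by
  have h := integrableOn_rpow_mul_exp_neg_mul_rpow (s := (i + k : ℕ)) (p := 1) (b := n)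
    (neg_one_lt_zero.trans_le (Nat.cast_nonneg _)) one_pos (by exact_mod_cast hn)
  simp only [Real.rpow_natCast, Real.rpow_one, neg_mul] at h
  simp only [szaszBasis_mul_pow]
  exact h.const_mul _

theorem integral_szaszBasis_mul_pow {n : ℕ} (hn : 0 < n) (i k : ℕ) :
    ∫ u in Ioi 0, szaszBasis n i u * u ^ k = (i + k).descFactorial k / (n : ℝ) ^ (k + 1) := by
  have hn' : (0 : ℝ) < n := by exact_mod_cast hn
  have h := integral_rpow_mul_exp_neg_mul_Ioi (a := (i + k : ℕ) + 1) (by positivity) hn'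
  simp only [add_sub_cancel_right, Real.rpow_natCast, Real.Gamma_nat_eq_factorial] at h
  have hfac := Nat.factorial_mul_descFactorial (Nat.le_add_left k i)
  rw [Nat.add_sub_cancel] at hfac
  simp only [szaszBasis_mul_pow]
  rw [integral_const_mul, h, ← Nat.cast_add_one, Real.rpow_natCast, ← hfac]
  push_cast
  rw [one_div, inv_pow]
  field_simp
  ring

theorem integral_szaszBasis_mul_sub_pow {n : ℕ} (hn : 0 < n) (i m : ℕ) (x : ℝ) :
    ∫ u in Ioi 0, szaszBasis n i u * (u - x) ^ m =
      ∑ k ∈ range (m + 1),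
        m.choose k * (-x) ^ (m - k) * ((i + k).descFactorial k / (n : ℝ) ^ (k + 1)) := by
  have hexpand : (fun u => szaszBasis n i u * (u - x) ^ m) =
      fun u => ∑ k ∈ range (m + 1), m.choose k * (-x) ^ (m - k) * (szaszBasis n i u * u ^ k) := by
    funext u
    rw [sub_eq_add_neg, add_pow, mul_sum]
    exact sum_congr rfl fun k _ => by ring
  rw [hexpand, integral_finsetSum _ fun k _ => (integrableOn_szaszBasis_mul_pow hn i k).const_mul _]
  exact sum_congr rfl fun k _ => by rw [integral_const_mul, integral_szaszBasis_mul_pow hn]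

noncomputable def szaszWeight (n : ℕ) (α x : ℝ) (i : ℕ) : ℝ :=
  (1 + (n : ℝ) * α) ^ (-x / α) * (α + 1 / (n : ℝ)) ^ (-(i : ℤ)) *
    (risingFac x α i / (Nat.factorial i : ℝ))

theorem U_eq_tsum_szaszWeight (n : ℕ) (α : ℝ) (f : ℝ → ℝ) (x : ℝ) :
    U n α f x = n * ∑' i, szaszWeight n α x i * ∫ u in Ioi 0, szaszBasis n i u * f u :=
  rfl

theorem szaszWeight_add_mul_descFactorial {n : ℕ} (hn : 0 < n) {α : ℝ} (hα : 0 < α)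
    (x : ℝ) (r j : ℕ) :
    szaszWeight n α x (j + r) * (j + r).descFactorial r =
      (1 + n * α) ^ (-x / α) * (n / (1 + n * α)) ^ r * risingFac x α r *
        (risingFac (x + r * α) α j * (n / (1 + n * α)) ^ j / (j.factorial : ℝ)) := by
  have hn' : (0 : ℝ) < n := by exact_mod_cast hn
  have hz : (α + 1 / (n : ℝ))⁻¹ = n / (1 + n * α) := by
    field_simp; ring
  have hfac := Nat.factorial_mul_descFactorial (Nat.le_add_right r j)
  rw [Nat.add_sub_cancel_left] at hfac
  have hj : (j.factorial : ℝ) ≠ 0 := by positivity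
  rw [szaszWeight, zpow_neg, zpow_natCast, ← inv_pow, hz, add_comm j r, risingFac_add, ← hfac,
    pow_add]
  push_cast
  field_simp

theorem hasSum_szaszWeight_mul_descFactorial {n : ℕ} (hn : 0 < n) {α : ℝ} (hα : 0 < α)
    (x : ℝ) (r : ℕ) :
    HasSum (fun i => szaszWeight n α x i * i.descFactorial r) (n ^ r * risingFac x α r) := by
  set c : ℝ := 1 + n * α with hc
  have hc0 : 0 < c := by positivity
  have hαz : 1 - α * (n / c) = c⁻¹ := by
    rw [hc]; field_simp; ring
  have hαz_lt : |α * (n / c)| < 1 := by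
    rw [abs_of_nonneg (by positivity)]
    linarith [inv_pos.2 hc0]
  have hvanish : ∑ i ∈ range r, szaszWeight n α x i * (i.descFactorial r : ℝ) = 0 :=
    sum_eq_zero fun i hi => by
      rw [Nat.descFactorial_eq_zero_iff_lt.2 (mem_range.1 hi), Nat.cast_zero, mul_zero]
  have hvalue : c ^ (-x / α) * (n / c) ^ r * risingFac x α r * (c⁻¹) ^ (-((x + r * α) / α)) =
      n ^ r * risingFac x α r := by
    have hexp : c ^ (-x / α) * (c⁻¹) ^ (-((x + r * α) / α)) = c ^ r := by
      rw [Real.inv_rpow hc0.le, ← Real.rpow_neg hc0.le, neg_neg, ← Real.rpow_add hc0,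
        show -x / α + (x + r * α) / α = r by field_simp; ring, Real.rpow_natCast]
    calc _ = c ^ (-x / α) * (c⁻¹) ^ (-((x + r * α) / α)) * (n / c) ^ r * risingFac x α r := by
          ring
      _ = (n / c * c) ^ r * risingFac x α r := by rw [hexp, mul_pow]; ring
      _ = n ^ r * risingFac x α r := by rw [div_mul_cancel₀ _ hc0.ne']
  have hshifted := (hasSum_risingFac hα.ne' hαz_lt (x + r * α)).mul_left
    (c ^ (-x / α) * (n / c) ^ r * risingFac x α r)
  rw [← funext (szaszWeight_add_mul_descFactorial hn hα x r), hαz, hvalue] at hshifted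
  have h := (hasSum_nat_add_iff (f := fun i => szaszWeight n α x i * i.descFactorial r) r).1
    hshifted
  rwa [hvanish, add_zero] at h

theorem hasSum_szaszWeight_mul_integral_sub_pow {n : ℕ} (hn : 0 < n) {α : ℝ} (hα : 0 < α)
    (x : ℝ) (m : ℕ) :
    HasSum (fun i => szaszWeight n α x i * ∫ u in Ioi 0, szaszBasis n i u * (u - x) ^ m)
      (∑ k ∈ range (m + 1), m.choose k * (-x) ^ (m - k) / (n : ℝ) ^ (k + 1) *
        ∑ r ∈ range (k + 1), k.choose r * k.descFactorial (k - r) * (n ^ r * risingFac x α r)) := by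
  have hterm : ∀ i, szaszWeight n α x i * ∫ u in Ioi 0, szaszBasis n i u * (u - x) ^ m =
      ∑ k ∈ range (m + 1), m.choose k * (-x) ^ (m - k) / (n : ℝ) ^ (k + 1) *
        ∑ r ∈ range (k + 1), k.choose r * k.descFactorial (k - r) *
          (szaszWeight n α x i * i.descFactorial r) := by
    intro i
    rw [integral_szaszBasis_mul_sub_pow hn, mul_sum]
    refine sum_congr rfl fun k _ => ?_
    rw [Nat.add_descFactorial_eq_sum]
    push_cast
    simp only [sum_div, mul_sum]
    exact sum_congr rfl fun r _ => by ring
  rw [funext hterm]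
  exact hasSum_sum fun k _ => (hasSum_sum fun r _ =>
    (hasSum_szaszWeight_mul_descFactorial hn hα x r).mul_left _).mul_left _

theorem theta_eq_sum {n : ℕ} (hn : 0 < n) {α : ℝ} (hα : 0 < α) (x : ℝ) (m : ℕ) :
    theta n α m x = n * ∑ k ∈ range (m + 1), m.choose k * (-x) ^ (m - k) / (n : ℝ) ^ (k + 1) *
        ∑ r ∈ range (k + 1), k.choose r * k.descFactorial (k - r) * (n ^ r * risingFac x α r) := by
  rw [theta, U_eq_tsum_szaszWeight, (hasSum_szaszWeight_mul_integral_sub_pow hn hα x m).tsum_eq]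

theorem stmt5_general (n : ℕ) (hn : 0 < n) (α : ℝ) (hα : 0 < α) (x : ℝ) :
    theta n α 3 x =
      (2 * α ^ 2 * n ^ 3 * x + 9 * α * n ^ 2 * x + 12 * n * x + 6) / (n : ℝ) ^ 3 ∧
    theta n α 4 x =
      (3 * α ^ 2 * n ^ 4 * x * (2 * α + x) + 4 * α * n ^ 3 * x * (8 * α + 3 * x) +
        12 * n ^ 2 * x * (6 * α + x) + 72 * n * x + 24) / (n : ℝ) ^ 4 := by
  have hn' : (n : ℝ) ≠ 0 := by positivity
  simp only [theta_eq_sum hn hα, sum_range_succ, sum_range_zero, risingFac, prod_range_succ,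
    prod_range_zero]
  norm_num [Nat.choose, Nat.descFactorial]
  constructor <;> (field_simp; ring)

theorem stmt5 (n : ℕ) (hn : 0 < n) (α : ℝ) (hα : 0 < α) (hαn : α ≤ 1 / n)
    (x : ℝ) (hx : 0 ≤ x) :
    theta n α 3 x =
      (2 * α ^ 2 * n ^ 3 * x + 9 * α * n ^ 2 * x + 12 * n * x + 6) / (n : ℝ) ^ 3 ∧
    theta n α 4 x =
      (3 * α ^ 2 * n ^ 4 * x * (2 * α + x) + 4 * α * n ^ 3 * x * (8 * α + 3 * x) +
        12 * n ^ 2 * x * (6 * α + x) + 72 * n * x + 24) / (n : ℝ) ^ 4 :=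
  stmt5_general n hn α hα x
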